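/- Let (X,d) be a metric space and f : X → X a continuous map. If a point p ∈ X is compact-perturbation chain recurrent for f, then p is topologically chain recurrent for f. -/
import Mathlib

/-- `p` is compact-perturbation chain recurrent for `f`: there is a compact set `W`
such that for every `ε > 0` there is an `ε`-chain from `p` to itself whose only jumps
occur at points of `W`. -/
def CompactPertChainRecurrentPt {X : Type*} [MetricSpace X] (f : X → X) (p : X) : Prop :=
  ∃ W : Set X, IsCompact W ∧ ∀ ε > (0 : ℝ), ∃ n : ℕ, 1 ≤ n ∧ ∃ c : ℕ → X,
    c 0 = p ∧ c n = p ∧ (∀ i < n, dist (f (c i)) (c (i + 1)) < ε) ∧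
    (∀ i < n, f (c i) ∉ W → c (i + 1) = f (c i))

/-- `p` is topologically chain recurrent for `f`: for every neighborhood `N` of the
diagonal there is an `N`-chain from `p` to itself. -/
def TopChainRecurrentPt {X : Type*} [TopologicalSpace X] (f : X → X) (p : X) : Prop :=
  ∀ N ∈ nhdsSet (Set.diagonal X), ∃ n : ℕ, 1 ≤ n ∧ ∃ c : ℕ → X, c 0 = p ∧ c n = p ∧
    ∀ i < n, (f (c i), c (i + 1)) ∈ N

/-- In a metric space, compact-perturbation chain recurrence implies topological chain
recurrence. -/
theorem topChainRecurrent_of_compactPertChainRecurrent {X : Type*} [MetricSpace X]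
    (f : X → X) (hf : Continuous f) (p : X) (hp : CompactPertChainRecurrentPt f p) :
    TopChainRecurrentPt f p := by
  obtain ⟨W, hW, hchain⟩ := hp
  intro N hN
  have hsub : Set.diagonal X ⊆ interior N := subset_interior_iff_mem_nhdsSet.2 hN
  -- compact diagonal copy of W inside interior N
  set K : Set (X × X) := (fun x => (x, x)) '' W with hK
  have hKc : IsCompact K := hW.image (continuous_id.prodMk continuous_id)
  have hKsub : K ⊆ interior N := by
    rintro _ ⟨x, -, rfl⟩
    exact hsub rfl
  obtain ⟨δ, hδ, hthick⟩ :=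
    hKc.exists_thickening_subset_open isOpen_interior hKsub
  obtain ⟨n, hn, c, hc0, hcn, hd, hjump⟩ := hchain δ hδ
  refine ⟨n, hn, c, hc0, hcn, fun i hi => ?_⟩
  by_cases hW' : f (c i) ∈ W
  · have : (f (c i), c (i + 1)) ∈ Metric.thickening δ K := by
      rw [Metric.mem_thickening_iff]
      refine ⟨(f (c i), f (c i)), ⟨f (c i), hW', rfl⟩, ?_⟩
      simp only [Prod.dist_eq, dist_self]
      exact max_lt hδ (by rw [dist_comm]; exact hd i hi)
    exact interior_subset (hthick this)
  · have := hjump i hi hW'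
    rw [this]
    exact interior_subset (hsub rfl)
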